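/- In the power-series quotient update, only the middle coefficients of G·Q_k are needed: with notation as above, (F − G·Q_k) div X^k taken mod X^ℓ equals F_{[k..k+ℓ[} − MP(G_{[1..k+ℓ[}, Q_{k[0..k[}), where MP(A,B) = (A·B div X^{k-1}) mod X^ℓ for A of size k+ℓ-1 and B of size k. -/

import Mathlib

/-!
Coefficient `k - 1 + i` of `G_{[1..k+ℓ[} · Q_k` only involves coefficients of `G_{[1..k+ℓ[}` of
index below `k + ℓ - 1`, so it is that of `(G div X) · Q_k`. Since `G = X · (G div X) + g₀`,
coefficient `k + i` of `G · Q_k` differs from it only by `g₀ · q_{k+i}`, which vanishes because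
`deg Q_k < k`.
-/

open Polynomial

/-- `chunk F a b` is the polynomial `F_{[a..b[}` = Σ_{i=a}^{b-1} f_i X^{i-a}. -/
noncomputable def chunk {K : Type*} [CommRing K] (F : Polynomial K) (a b : ℕ) : Polynomial K :=
  ∑ i ∈ Finset.range (b - a), Polynomial.C (F.coeff (a + i)) * Polynomial.X ^ i

namespace Polynomial

variable {R : Type*} [CommRing R]

theorem coeff_chunk (F : R[X]) (a b j : ℕ) :
    (chunk F a b).coeff j = if j < b - a then F.coeff (a + j) else 0 := by
  simp only [chunk, finsetSum_coeff, coeff_C_mul, coeff_X_pow, mul_ite, mul_one, mul_zero,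
    Finset.sum_ite_eq, Finset.mem_range]

theorem coeff_mul_congr_left {P P' : R[X]} (Q : R[X]) {n : ℕ}
    (h : ∀ j ≤ n, P.coeff j = P'.coeff j) : (P * Q).coeff n = (P' * Q).coeff n := by
  simp only [coeff_mul]
  refine Finset.sum_congr rfl fun x hx => ?_
  rw [h x.1 (Finset.HasAntidiagonal.antidiagonal.fst_le hx)]

theorem coeff_chunk_one_mul (G Q : R[X]) {b n : ℕ} (hn : n < b - 1) :
    (chunk G 1 b * Q).coeff n = (divX G * Q).coeff n :=
  coeff_mul_congr_left Q fun j hj => by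
    rw [coeff_chunk, if_pos (by omega), coeff_divX, add_comm]

theorem coeff_mul_succ_of_coeff_eq_zero (G Q : R[X]) {n : ℕ} (hQ : Q.coeff (n + 1) = 0) :
    (G * Q).coeff (n + 1) = (divX G * Q).coeff n := by
  conv_lhs => rw [← divX_mul_X_add G]
  rw [add_mul, mul_right_comm, coeff_add, coeff_mul_X, coeff_C_mul, hQ, mul_zero, add_zero]

end Polynomial

theorem middle_product_update_general {K : Type*} [CommRing K] (k ℓ : ℕ) (hlk : ℓ ≤ k)
    (F G Qk : Polynomial K)
    (hQkdeg : ∀ i, k ≤ i → Qk.coeff i = 0) :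
    ∀ i < ℓ,
      (F - G * Qk).coeff (k + i) =
        F.coeff (k + i) - (chunk ((chunk G 1 (k + ℓ)) * Qk) (k - 1) ((k - 1) + ℓ)).coeff i := by
  intro i hi
  have hk : k + i = k - 1 + i + 1 := by omega
  rw [coeff_sub, coeff_chunk, if_pos (by omega), coeff_chunk_one_mul G Qk (by omega), hk,
    coeff_mul_succ_of_coeff_eq_zero G Qk (hQkdeg _ (by omega))]

/-- Only the middle coefficients of `G·Qk` are needed in the quotient update:
for `0 ≤ i < ℓ`, the coefficient of `X^i` in `((F − G·Qk) div X^k) mod X^ℓ` equals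
`F_{[k+i]} − MP(G_{[1..k+ℓ[}, Qk)_{[i]}`, where `MP(A,B) = ((A·B) div X^{k-1}) mod X^ℓ`. -/
theorem middle_product_update {K : Type*} [CommRing K] (k ℓ : ℕ) (hℓ : 0 < ℓ) (hlk : ℓ ≤ k)
    (F G Qk : Polynomial K)
    (hQkdeg : ∀ i, k ≤ i → Qk.coeff i = 0)
    (hQk : ∀ i < k, F.coeff i = (G * Qk).coeff i) :
    ∀ i < ℓ,
      (F - G * Qk).coeff (k + i) =
        F.coeff (k + i) - (chunk ((chunk G 1 (k + ℓ)) * Qk) (k - 1) ((k - 1) + ℓ)).coeff i :=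
  middle_product_update_general k ℓ hlk F G Qk hQkdeg
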